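/- Let k be a field and n ≥ 1. In the ring A = k[t][a,b]/(a^2 + t a b + b^2), one has (a^{n}, b^{n}) A :_{k[t]} a b^{n−1} = (P_{n−1}) as ideals of k[t], where P_j is defined by P_0 = 1, P_1 = t, P_{j+1} = t P_j − P_{j−1}. Equivalently, for g ∈ k[t]: g · a b^{n−1} ∈ (a^n, b^n, a^2 + t a b + b^2) k[t,a,b] if and only if P_{n−1} divides g. -/

import Mathlib

/-!
The recurrence makes `P j` the rescaled Chebyshev polynomial `S j`, and reducing powers of `a`
modulo `q = a² + t a b + b²` gives
`a ^ (j + 1) ≡ (-1) ^ j (S_j(t) a b ^ j + S_{j-1}(t) b ^ (j + 1))  (mod q)`,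
so `S_{n-1}(t) a b ^ (n - 1) ∈ (aⁿ, bⁿ, q)`.

Conversely, let `y` be the root of `y² + t y + 1` in `D = k[t][y] / (y² + t y + 1)`. Substituting
`a = y X`, `b = X` kills `q`, and comparing coefficients of `Xⁿ` in a relation
`g a b ^ (n - 1) = c₁ aⁿ + c₂ bⁿ + c₃ q` gives `g y = r₁ yⁿ + r₂`, where `r₁, r₂ ∈ k[t]` are
the values of `c₁, c₂` at `a = b = 0`.
Since `yⁿ = ±(S_{n-1}(t) y + S_{n-2}(t))` and `1, y` are `k[t]`-linearly independent in `D`,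
`g = ±r₁ S_{n-1}`.
-/

open MvPolynomial

open Polynomial.Chebyshev (S)

theorem eq_S_of_recurrence {R : Type*} [CommRing R] {P : ℕ → Polynomial R}
    (hP0 : P 0 = 1) (hP1 : P 1 = Polynomial.X)
    (hPrec : ∀ j : ℕ, 1 ≤ j → P (j + 1) = Polynomial.X * P j - P (j - 1)) (j : ℕ) :
    P j = S R j := by
  induction j using Nat.twoStepInduction with
  | zero => simp [hP0]
  | one => simp [hP1]
  | more n ih0 ih1 =>
    rw [hPrec (n + 1) (by omega), ih1, Nat.add_sub_cancel, ih0]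
    push_cast
    rw [Polynomial.Chebyshev.S_add_two]

section Reduction

variable {A : Type*} [CommRing A]

theorem sq_add_mul_add_sq_dvd_pow_sub_S (t a b : A) (n : ℕ) :
    a ^ 2 + t * a * b + b ^ 2 ∣
      a ^ (n + 1) -
        (-1) ^ n * ((S A n).eval t * a * b ^ n + (S A (n - 1)).eval t * b ^ (n + 1)) := by
  induction n with
  | zero => simp
  | succ n ih =>
    obtain ⟨w, hw⟩ := ih
    refine ⟨a * w + (-1) ^ n * (S A n).eval t * b ^ n, ?_⟩
    push_cast
    rw [add_sub_cancel_right, Polynomial.Chebyshev.S_add_one, Polynomial.eval_sub,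
      Polynomial.eval_mul, Polynomial.eval_X]
    linear_combination a * hw

theorem pow_succ_eq_of_sq_add_mul_add_one_eq_zero {t y : A} (hy : y ^ 2 + t * y + 1 = 0)
    (n : ℕ) : y ^ (n + 1) = (-1) ^ n * ((S A n).eval t * y + (S A (n - 1)).eval t) := by
  have h := sq_add_mul_add_sq_dvd_pow_sub_S t y 1 n
  simpa only [one_pow, mul_one, hy, zero_dvd_iff, sub_eq_zero] using h

theorem eval_S_mul_mul_pow_mem_span (t a b : A) (n : ℕ) :
    (S A n).eval t * a * b ^ n ∈
      Ideal.span {a ^ (n + 1), b ^ (n + 1), a ^ 2 + t * a * b + b ^ 2} := by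
  obtain ⟨w, hw⟩ := sq_add_mul_add_sq_dvd_pow_sub_S t a b n
  have hsign : ((-1 : A) ^ n) ^ 2 = 1 := by rw [← pow_mul, pow_mul', neg_one_sq, one_pow]
  have hcomb : (S A n).eval t * a * b ^ n = (-1) ^ n * a ^ (n + 1)
      + (-(S A (n - 1)).eval t) * b ^ (n + 1) + (-(-1) ^ n * w) * (a ^ 2 + t * a * b + b ^ 2) := by
    linear_combination -(-1) ^ n * hw -
      ((S A n).eval t * a * b ^ n + (S A (n - 1)).eval t * b ^ (n + 1)) * hsign
  rw [hcomb]
  refine Ideal.add_mem _ (Ideal.add_mem _ ?_ ?_) ?_ <;>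
    exact Ideal.mul_mem_left _ _ (Ideal.subset_span (by simp))

end Reduction

theorem AdjoinRoot.eq_zero_of_algebraMap_add_algebraMap_mul_root_eq_zero {R : Type*}
    [CommRing R] {f : Polynomial R} (hf : f.Monic) (hdeg : 1 < f.natDegree) {r s : R}
    (h : algebraMap R _ r + algebraMap R _ s * root f = 0) : r = 0 ∧ s = 0 := by
  have hlin : Polynomial.C s * Polynomial.X + Polynomial.C r = 0 := by
    rw [algebraMap_eq, ← mk_C (f := f), ← mk_C (f := f), ← mk_X, ← map_mul, add_comm,
      ← map_add, mk_eq_zero] at h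
    by_contra hne
    refine hf.not_dvd_of_degree_lt hne (Polynomial.degree_linear_le.trans_lt ?_) h
    rw [Polynomial.degree_eq_natDegree (by rintro rfl; simp at hdeg)]
    exact_mod_cast hdeg
  have h0 := congrArg (Polynomial.coeff · 0) hlin
  have h1 := congrArg (Polynomial.coeff · 1) hlin
  simp only [Polynomial.coeff_add, Polynomial.coeff_C_mul_X, Polynomial.coeff_C,
    Polynomial.coeff_zero] at h0 h1
  simpa using And.intro h0 h1

theorem aeval_mul_eq_of_mul_mul_pow_eq {k D : Type*} [CommRing k] [CommRing D] [Algebra k D]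
    {t y : D} (hy : y ^ 2 + t * y + 1 = 0) {m : ℕ} {g : Polynomial k}
    {c₁ c₂ c₃ : MvPolynomial (Fin 3) k}
    (h : Polynomial.aeval (X 0) g * X 1 * X 2 ^ m =
      c₁ * X 1 ^ (m + 1) +
        (c₂ * X 2 ^ (m + 1) + c₃ * (X 1 ^ 2 + X 0 * X 1 * X 2 + X 2 ^ 2))) :
    Polynomial.aeval t g * y = aeval ![t, 0, 0] c₁ * y ^ (m + 1) + aeval ![t, 0, 0] c₂ := by
  set Ψ : MvPolynomial (Fin 3) k →ₐ[k] Polynomial D :=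
    aeval ![Polynomial.C t, Polynomial.C y * Polynomial.X, Polynomial.X]
  have hΨg : Ψ (Polynomial.aeval (X 0) g) = Polynomial.C (Polynomial.aeval t g) := by
    rw [← Polynomial.aeval_algHom_apply]
    simpa [Ψ] using Polynomial.aeval_algebraMap_apply (Polynomial D) t g
  have hΨ₀ : ∀ c, (Ψ c).coeff 0 = aeval ![t, 0, 0] c := fun c => by
    rw [Polynomial.coeff_zero_eq_aeval_zero, ← AlgHom.restrictScalars_apply k, comp_aeval_apply]
    congr 1
    ext i
    fin_cases i <;> simp
  have hyC : Polynomial.C y ^ 2 + Polynomial.C t * Polynomial.C y + 1 = (0 : Polynomial D) := by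
    rw [← map_pow, ← map_mul, ← map_one Polynomial.C, ← map_add, ← map_add, hy, map_zero]
  have hΨh : Polynomial.C (Polynomial.aeval t g) * Polynomial.C y * Polynomial.X ^ (m + 1) =
      Ψ c₁ * Polynomial.C y ^ (m + 1) * Polynomial.X ^ (m + 1) +
        Ψ c₂ * Polynomial.X ^ (m + 1) := by
    have := congrArg Ψ h
    simp only [map_add, map_mul, map_pow, hΨg] at this
    simp only [Ψ, aeval_X, Matrix.cons_val] at this
    linear_combination this + Ψ c₃ * Polynomial.X ^ 2 * hyC
  have hcoeff : ∀ p : Polynomial D, (p * Polynomial.X ^ (m + 1)).coeff (m + 1) = p.coeff 0 :=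
    fun p => by simpa using Polynomial.coeff_mul_X_pow p (m + 1) 0
  simpa only [Polynomial.coeff_add, hcoeff, Polynomial.mul_coeff_zero, ← Polynomial.C_pow,
    Polynomial.coeff_C_zero, hΨ₀] using congrArg (Polynomial.coeff · (m + 1)) hΨh

theorem S_dvd_of_mul_mul_pow_mem_span {k : Type*} [CommRing k] [Nontrivial k] {m : ℕ}
    {g : Polynomial k}
    (hmem : Polynomial.aeval (X 0 : MvPolynomial (Fin 3) k) g * X 1 * X 2 ^ m ∈
      Ideal.span {(X 1 : MvPolynomial (Fin 3) k) ^ (m + 1), X 2 ^ (m + 1),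
        X 1 ^ 2 + X 0 * X 1 * X 2 + X 2 ^ 2}) :
    S k m ∣ g := by
  obtain ⟨c₁, z, hz, hx⟩ := Ideal.mem_span_insert.1 hmem
  obtain ⟨c₂, c₃, rfl⟩ := Ideal.mem_span_pair.1 hz
  set f : Polynomial (Polynomial k) :=
    Polynomial.X ^ 2 + Polynomial.C Polynomial.X * Polynomial.X + 1
  have hf : f.Monic := by simp only [f]; monicity!
  have hdeg : f.natDegree = 2 := by simp only [f]; compute_degree!
  set o := algebraMap (Polynomial k) (AdjoinRoot f)
  set y := AdjoinRoot.root f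
  have hy : y ^ 2 + o Polynomial.X * y + 1 = 0 := by
    simpa [f, o, y, AdjoinRoot.algebraMap_eq] using AdjoinRoot.eval₂_root f
  have ho : ∀ p : Polynomial k, Polynomial.aeval (o Polynomial.X) p = o p := fun p => by
    rw [Polynomial.aeval_algebraMap_apply, Polynomial.aeval_X_left_apply]
  have ho' : ∀ c : MvPolynomial (Fin 3) k,
      aeval ![o Polynomial.X, 0, 0] c = o (aeval ![Polynomial.X, 0, 0] c) := fun c => by
    rw [← aeval_algebraMap_apply]
    congr 1
    ext i
    fin_cases i <;> simp [o]
  have key := aeval_mul_eq_of_mul_mul_pow_eq hy hx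
  rw [pow_succ_eq_of_sq_add_mul_add_one_eq_zero hy, ← Polynomial.Chebyshev.aeval_S (R := k),
    ← Polynomial.Chebyshev.aeval_S (R := k), ho, ho, ho, ho', ho'] at key
  set r₁ : Polynomial k := aeval ![Polynomial.X, 0, 0] c₁
  set r₂ : Polynomial k := aeval ![Polynomial.X, 0, 0] c₂
  obtain ⟨-, hs⟩ :=
    AdjoinRoot.eq_zero_of_algebraMap_add_algebraMap_mul_root_eq_zero hf (by omega)
      (r := r₂ + (-1) ^ m * r₁ * S k (m - 1 : ℤ)) (s := (-1) ^ m * r₁ * S k m - g)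
      (by simp only [map_add, map_sub, map_mul, map_pow, map_neg, map_one]
          linear_combination -key)
  exact ⟨(-1) ^ m * r₁, by linear_combination -hs⟩

/-- In `k[t,a,b]` (with `t = X 0`, `a = X 1`, `b = X 2`), for `n ≥ 1` and
`g ∈ k[t]`: `g · a b^{n-1} ∈ (a^n, b^n, a² + t a b + b²)` iff `P_{n-1} ∣ g`, where
`P_0 = 1`, `P_1 = t`, `P_{j+1} = t P_j - P_{j-1}`. -/
theorem stmt13 {k : Type*} [Field k] (P : ℕ → Polynomial k)
    (hP0 : P 0 = 1) (hP1 : P 1 = Polynomial.X)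
    (hPrec : ∀ j : ℕ, 1 ≤ j → P (j + 1) = Polynomial.X * P j - P (j - 1)) :
    ∀ n : ℕ, 1 ≤ n → ∀ g : Polynomial k,
      (Polynomial.aeval (X 0 : MvPolynomial (Fin 3) k) g * (X 1) * (X 2) ^ (n - 1) ∈
        Ideal.span {(X 1 : MvPolynomial (Fin 3) k) ^ n, (X 2) ^ n,
          (X 1) ^ 2 + (X 0) * (X 1) * (X 2) + (X 2) ^ 2}) ↔ P (n - 1) ∣ g := by
  intro n hn g
  obtain ⟨m, rfl⟩ : ∃ m, n = m + 1 := ⟨n - 1, by omega⟩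
  rw [Nat.add_sub_cancel, eq_S_of_recurrence hP0 hP1 hPrec]
  refine ⟨S_dvd_of_mul_mul_pow_mem_span, ?_⟩
  rintro ⟨h, rfl⟩
  have hS := eval_S_mul_mul_pow_mem_span (X 0 : MvPolynomial (Fin 3) k) (X 1) (X 2) m
  convert Ideal.mul_mem_left _ (Polynomial.aeval (X 0) h) hS using 1
  rw [map_mul, Polynomial.Chebyshev.aeval_S]
  ring
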